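/- arXiv:2402.14264 — 4 statements merged into one kernel-verified Lean document; each statement's English description precedes it below -/
import Mathlib

section
/- Let c ∈ (0,1), ĝ : [0,1]^K → [c,1], w, ŵ : [0,1]^K → ℝ with 0 ≤ ŵ(x) ≤ w(x) and ‖w‖_∞ < ∞, and Δ : [0,1]^K → {−1,+1} measurable with E_X[w(X)ŵ(X)Δ(X)] = 0 under X ~ Uniform([0,1]^K). Let α, β > 0 with α ≥ β and c^{−1}β‖w‖_∞ ≤ 1/2. Then E_X[ w(X) · (ĝ(1,X) + αŵ(X)Δ(X)) / (1 − (β/ĝ(1,X))ŵ(X)Δ(X)) ] ≥ E_X[w(X)ĝ(1,X)] + αβ E_X[w(X)ŵ(X)²/ĝ(1,X)] − C₀(αβ² + β³), where C₀ = 4c^{−2}(1+‖w‖_∞)⁴. -/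
open MeasureTheory Set

/-- The uniform distribution on the cube `[0,1]^K`. -/
noncomputable def unif (K : ℕ) : Measure (Fin K → ℝ) :=
  volume.restrict (Set.Icc 0 1)

lemma ptwise (c α β W G h ww d : ℝ) (hc : 0 < c)
    (hG : c ≤ G) (hG1 : G ≤ 1) (hh0 : 0 ≤ h) (hhw : h ≤ ww) (hwW : ww ≤ W)
    (hd : d = 1 ∨ d = -1) (hα : 0 < α) (hβ : 0 < β) (hαβ : β ≤ α)
    (hsm : β * h ≤ G / 2) :
    ww * (G + α * h * d) / (1 - β / G * h * d)
      ≥ ww * G + (α + β) * (ww * h * d) + α * β * (ww * h ^ 2 / G)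
        - 4 * (c ^ 2)⁻¹ * (1 + W) ^ 4 * (α * β ^ 2 + β ^ 3) := by
  have hG0 : (0:ℝ) < G := lt_of_lt_of_le hc hG
  have hww : 0 ≤ ww := le_trans hh0 hhw
  have hW0 : 0 ≤ W := le_trans hww hwW
  have hhW : h ≤ W := le_trans hhw hwW
  have hS : (0:ℝ) < β ^ 3 + α * β ^ 2 := by positivity
  have hP1 : ww * h ^ 3 ≤ (1 + W) ^ 4 := by
    have e1 : ww * h ^ 3 ≤ W * W ^ 3 :=
      mul_le_mul hwW (pow_le_pow_left₀ hh0 hhW 3) (by positivity) hW0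
    have e2 : W ^ 4 ≤ (1 + W) ^ 4 := pow_le_pow_left₀ hW0 (by linarith) 4
    nlinarith
  have hErr : (β ^ 3 + α * β ^ 2) * (ww * h ^ 3) / (c ^ 2)
      ≤ 4 * (c ^ 2)⁻¹ * (1 + W) ^ 4 * (α * β ^ 2 + β ^ 3) := by
    rw [div_eq_mul_inv]
    have e3 : (β ^ 3 + α * β ^ 2) * (ww * h ^ 3) ≤ (β ^ 3 + α * β ^ 2) * (1 + W) ^ 4 :=
      mul_le_mul_of_nonneg_left hP1 hS.le
    have e4 : (0:ℝ) ≤ (c ^ 2)⁻¹ := by positivity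
    have e5 : (0:ℝ) ≤ (β ^ 3 + α * β ^ 2) * (1 + W) ^ 4 * (c ^ 2)⁻¹ := by positivity
    nlinarith [mul_le_mul_of_nonneg_right e3 e4]
  rcases hd with rfl | rfl
  · -- d = 1
    have hden : (0:ℝ) < G - h * β := by nlinarith
    have hu : β / G * h * 1 ≤ 1 / 2 := by
      rw [mul_one, div_mul_eq_mul_div, div_le_div_iff₀ hG0 (by norm_num : (0:ℝ) < 2)]
      linarith
    have hD : (0:ℝ) < 1 - β / G * h * 1 := by linarith
    have key : ww * (G + α * h * 1) / (1 - β / G * h * 1)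
        = ww * G + (α + β) * (ww * h * 1) + α * β * (ww * h ^ 2 / G)
          + β ^ 2 * (ww * h ^ 2) / G
          + (β ^ 3 + α * β ^ 2) * (ww * h ^ 3) / (G ^ 2 * (1 - β / G * h * 1)) := by
      have e0 : 1 - β / G * h * 1 = (G - h * β) / G := by field_simp
      rw [e0]
      field_simp
      ring
    rw [key]
    have t1 : 0 ≤ β ^ 2 * (ww * h ^ 2) / G := by positivity
    have t2 : 0 ≤ (β ^ 3 + α * β ^ 2) * (ww * h ^ 3) / (G ^ 2 * (1 - β / G * h * 1)) := by
      apply div_nonneg _ (le_of_lt (mul_pos (by positivity) hD))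
      positivity
    have t3 : (0:ℝ) < 4 * (c ^ 2)⁻¹ * (1 + W) ^ 4 * (α * β ^ 2 + β ^ 3) := by positivity
    linarith
  · -- d = -1
    have hden : (0:ℝ) < G + h * β := by positivity
    have hD : (1:ℝ) ≤ 1 - β / G * h * (-1) := by
      have : 0 ≤ β / G * h := by positivity
      linarith
    have hD0 : (0:ℝ) < 1 - β / G * h * (-1) := by linarith
    have key : ww * (G + α * h * (-1)) / (1 - β / G * h * (-1))
        = ww * G + (α + β) * (ww * h * (-1)) + α * β * (ww * h ^ 2 / G)
          + β ^ 2 * (ww * h ^ 2) / G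
          - (β ^ 3 + α * β ^ 2) * (ww * h ^ 3) / (G ^ 2 * (1 - β / G * h * (-1))) := by
      have e0 : 1 - β / G * h * (-1) = (G + h * β) / G := by field_simp; ring
      rw [e0]
      field_simp
      ring
    rw [key]
    have t1 : 0 ≤ β ^ 2 * (ww * h ^ 2) / G := by positivity
    have t2 : (β ^ 3 + α * β ^ 2) * (ww * h ^ 3) / (G ^ 2 * (1 - β / G * h * (-1)))
        ≤ (β ^ 3 + α * β ^ 2) * (ww * h ^ 3) / (c ^ 2) := by
      apply div_le_div_of_nonneg_left (by positivity) (by positivity)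
      nlinarith [sq_nonneg c]
    linarith


lemma unif_univ (K : ℕ) : unif K Set.univ = 1 := by
  simp [unif, Measure.restrict_apply_univ, Real.volume_Icc_pi]

instance instProbUnif (K : ℕ) : IsProbabilityMeasure (unif K) := ⟨unif_univ K⟩

lemma integrable_of_bdd {K : ℕ} {f : (Fin K → ℝ) → ℝ} (hm : Measurable f)
    (M : ℝ) (hb : ∀ x, |f x| ≤ M) : Integrable f (unif K) :=
  (integrable_const M).mono' hm.aestronglyMeasurable
    (Filter.Eventually.of_forall fun x => by simpa [Real.norm_eq_abs] using hb x)


/-- key Case-1 Taylor-expansion lower bound.  Here `W = ‖w‖_∞`. -/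
theorem stmt8 {K : ℕ} (c α β W : ℝ) (hc : c ∈ Set.Ioo (0:ℝ) 1)
    (g1 w wh Δ : (Fin K → ℝ) → ℝ)
    (hg : ∀ x, g1 x ∈ Set.Icc c 1)
    (hwh : ∀ x, 0 ≤ wh x ∧ wh x ≤ w x)
    (hW : ∀ x, w x ≤ W)
    (hΔ : ∀ x, Δ x = 1 ∨ Δ x = -1)
    (hgm : Measurable g1) (hwm : Measurable w) (hwhm : Measurable wh)
    (hΔm : Measurable Δ)
    (hα : 0 < α) (hβ : 0 < β) (hαβ : β ≤ α)
    (hsmall : c⁻¹ * β * W ≤ 1/2)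
    (hbal : ∫ x, w x * wh x * Δ x ∂(unif K) = 0) :
    ∫ x, w x * (g1 x + α * wh x * Δ x) / (1 - β / g1 x * wh x * Δ x) ∂(unif K)
      ≥ (∫ x, w x * g1 x ∂(unif K))
        + α * β * (∫ x, w x * (wh x)^2 / g1 x ∂(unif K))
        - (4 * (c^2)⁻¹ * (1 + W)^4) * (α * β^2 + β^3) := by
  obtain ⟨hc0, hc1⟩ := hc
  have hW0 : 0 ≤ W := le_trans (hwh 0).1 (le_trans (hwh 0).2 (hW 0))
  have hβW : β * W ≤ c / 2 := by
    have h1 : c * c⁻¹ = 1 := mul_inv_cancel₀ hc0.ne'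
    nlinarith [mul_le_mul_of_nonneg_left hsmall hc0.le]
  -- pointwise facts
  have hsm : ∀ x, β * wh x ≤ g1 x / 2 := fun x => by
    have h1 : β * wh x ≤ β * W :=
      mul_le_mul_of_nonneg_left (le_trans (hwh x).2 (hW x)) hβ.le
    have h2 := (hg x).1
    linarith
  have hDlb : ∀ x, 1/2 ≤ 1 - β / g1 x * wh x * Δ x := by
    intro x
    have hG0 : 0 < g1 x := lt_of_lt_of_le hc0 (hg x).1
    have habs : |β / g1 x * wh x * Δ x| ≤ 1/2 := by
      have hd : |Δ x| = 1 := by rcases hΔ x with h | h <;> simp [h]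
      rw [abs_mul, hd, mul_one,
        abs_of_nonneg (mul_nonneg (div_nonneg hβ.le hG0.le) (hwh x).1)]
      rw [div_mul_eq_mul_div, div_le_div_iff₀ hG0 (by norm_num : (0:ℝ) < 2)]
      have := hsm x
      linarith
    have := (abs_le.mp habs).2
    linarith
  -- integrability
  have hIF : Integrable
      (fun x => w x * (g1 x + α * wh x * Δ x) / (1 - β / g1 x * wh x * Δ x)) (unif K) := by
    apply integrable_of_bdd
    · exact (hwm.mul (hgm.add ((measurable_const.mul hwhm).mul hΔm))).div
        (measurable_const.sub (((measurable_const.div hgm).mul hwhm).mul hΔm))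
    · intro x
      have hd : |Δ x| = 1 := by rcases hΔ x with h | h <;> simp [h]
      have hG := hg x
      have hwx : 0 ≤ w x := le_trans (hwh x).1 (hwh x).2
      have hnum : |w x * (g1 x + α * wh x * Δ x)| ≤ W * (1 + α * W) := by
        rw [abs_mul]
        apply mul_le_mul _ _ (abs_nonneg _) hW0
        · rw [abs_of_nonneg hwx]; exact hW x
        · calc |g1 x + α * wh x * Δ x| ≤ |g1 x| + |α * wh x * Δ x| := abs_add_le _ _
            _ ≤ 1 + α * W := by
              rw [abs_mul, hd, mul_one, abs_mul, abs_of_nonneg hα.le,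
                abs_of_nonneg (hwh x).1, abs_of_nonneg (le_trans hc0.le hG.1)]
              have : wh x ≤ W := le_trans (hwh x).2 (hW x)
              have := hG.2
              nlinarith
      rw [abs_div]
      have hD := hDlb x
      have hDabs : (1:ℝ)/2 ≤ |1 - β / g1 x * wh x * Δ x| := le_trans hD (le_abs_self _)
      calc |w x * (g1 x + α * wh x * Δ x)| / |1 - β / g1 x * wh x * Δ x|
          ≤ (W * (1 + α * W)) / (1/2) :=
            div_le_div₀ (by positivity) hnum (by norm_num) hDabs
        _ = 2 * W * (1 + α * W) := by ring
  have hIA : Integrable (fun x => w x * g1 x) (unif K) := by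
    apply integrable_of_bdd (hwm.mul hgm) W
    intro x
    show |w x * g1 x| ≤ W
    rw [abs_mul, abs_of_nonneg (le_trans (hwh x).1 (hwh x).2),
      abs_of_nonneg (le_trans hc0.le (hg x).1)]
    nlinarith [hW x, (hg x).2, le_trans (hwh x).1 (hwh x).2, le_trans hc0.le (hg x).1]
  have hIB : Integrable (fun x => w x * wh x * Δ x) (unif K) := by
    apply integrable_of_bdd ((hwm.mul hwhm).mul hΔm) (W * W)
    intro x
    have hd : |Δ x| = 1 := by rcases hΔ x with h | h <;> simp [h]
    show |w x * wh x * Δ x| ≤ W * W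
    rw [abs_mul, hd, mul_one, abs_mul, abs_of_nonneg (le_trans (hwh x).1 (hwh x).2),
      abs_of_nonneg (hwh x).1]
    exact mul_le_mul (hW x) (le_trans (hwh x).2 (hW x)) (hwh x).1 hW0
  have hIC : Integrable (fun x => w x * (wh x)^2 / g1 x) (unif K) := by
    apply integrable_of_bdd ((hwm.mul (hwhm.pow measurable_const)).div hgm) (W * W^2 / c)
    intro x
    have hG0 : 0 < g1 x := lt_of_lt_of_le hc0 (hg x).1
    have hwx : 0 ≤ w x := le_trans (hwh x).1 (hwh x).2
    show |w x * (wh x)^2 / g1 x| ≤ W * W^2 / c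
    rw [abs_div, abs_of_nonneg hG0.le, abs_of_nonneg (by positivity : (0:ℝ) ≤ w x * (wh x)^2)]
    apply div_le_div₀ (by positivity) _ hc0 (hg x).1
    exact mul_le_mul (hW x) (pow_le_pow_left₀ (hwh x).1 (le_trans (hwh x).2 (hW x)) 2)
      (by positivity) hW0
  -- pointwise lower bound
  have hpt : ∀ x,
      w x * g1 x + (α + β) * (w x * wh x * Δ x) + α * β * (w x * (wh x)^2 / g1 x)
        - 4 * (c^2)⁻¹ * (1 + W)^4 * (α * β^2 + β^3)
      ≤ w x * (g1 x + α * wh x * Δ x) / (1 - β / g1 x * wh x * Δ x) := by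
    intro x
    have := ptwise c α β W (g1 x) (wh x) (w x) (Δ x) hc0 (hg x).1 (hg x).2
      (hwh x).1 (hwh x).2 (hW x) (hΔ x) hα hβ hαβ (hsm x)
    linarith [this]
  have hIL : Integrable
      (fun x => w x * g1 x + (α + β) * (w x * wh x * Δ x)
        + α * β * (w x * (wh x)^2 / g1 x)
        - 4 * (c^2)⁻¹ * (1 + W)^4 * (α * β^2 + β^3)) (unif K) :=
    ((hIA.add (hIB.const_mul _)).add (hIC.const_mul _)).sub (integrable_const _)
  have hI2 : Integrable (fun x => w x * g1 x + (α + β) * (w x * wh x * Δ x)) (unif K) :=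
    hIA.add (hIB.const_mul _)
  have hI3 : Integrable (fun x => w x * g1 x + (α + β) * (w x * wh x * Δ x)
      + α * β * (w x * (wh x)^2 / g1 x)) (unif K) := hI2.add (hIC.const_mul _)
  have hle := integral_mono hIL hIF hpt
  rw [integral_sub hI3 (integrable_const _),
    integral_add hI2 (hIC.const_mul _),
    integral_add hIA (hIB.const_mul _), integral_const_mul, integral_const_mul,
    hbal, integral_const] at hle
  simp only [probReal_univ, measure_univ, ENNReal.toReal_one, one_smul, mul_zero, add_zero] at hle
  linarith [hle]
end

section
/- For the Case-2 construction (g_λ(1,x) = ĝ(1,x)/(1 + (β/ĝ(1,x))ŵ(x)Δ(λ,x) − αβŵ(x)²), m_λ(x) = (ĝ(1,x)/g_λ(1,x))(m̂(x) + α m̂(x) ĝ(1,x) ŵ(x) Δ(λ,x))), the following pointwise identities hold when λ consists of i.i.d. Rademacher variables: E_λ[m_λ(x) g_λ(1,x)] = m̂(x) ĝ(1,x) and E_λ[m_λ(x)] = m̂(x) for all x ∈ [0,1]^K. -/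
open MeasureTheory Set

/-- pointwise averaging identities for the Case-2 construction:
`E_λ[m_λ(x) g_λ(1,x)] = m̂(x) ĝ(1,x)` and `E_λ[m_λ(x)] = m̂(x)`, using
`E_λ[Δ(λ,x)] = 0` and `Δ(λ,x)² = 1` for Rademacher signs `l : Fin m → Bool`. -/
theorem stmt11 {K m : ℕ} (α β : ℝ)
    (mhat ghat1 wh : (Fin K → ℝ) → ℝ)
    (Δ : (Fin m → Bool) → (Fin K → ℝ) → ℝ)
    (hΔ0 : ∀ x, (∑ l : Fin m → Bool, Δ l x) = 0)
    (hΔ1 : ∀ l x, (Δ l x)^2 = 1)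
    (glam1 mlam : (Fin m → Bool) → (Fin K → ℝ) → ℝ)
    (hglam1 : ∀ l x, glam1 l x =
      ghat1 x / (1 + β / ghat1 x * wh x * Δ l x - α * β * (wh x)^2))
    (hmlam : ∀ l x, mlam l x =
      ghat1 x / glam1 l x * (mhat x + α * mhat x * ghat1 x * wh x * Δ l x))
    (hgne : ∀ x, ghat1 x ≠ 0)
    (hden : ∀ l x, 1 + β / ghat1 x * wh x * Δ l x - α * β * (wh x)^2 ≠ 0) :
    ∀ x ∈ Set.Icc (0 : Fin K → ℝ) 1,
      ((2:ℝ)^m)⁻¹ * (∑ l : Fin m → Bool, mlam l x * glam1 l x)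
        = mhat x * ghat1 x ∧
      ((2:ℝ)^m)⁻¹ * (∑ l : Fin m → Bool, mlam l x) = mhat x := by
  intro x _
  have hcard : (Finset.univ : Finset (Fin m → Bool)).card = 2 ^ m := by
    simp [Finset.card_univ]
  have h2 : (2:ℝ)^m ≠ 0 := by positivity
  have key1 : ∀ l, mlam l x * glam1 l x
      = mhat x * ghat1 x + (α * mhat x * (ghat1 x)^2 * wh x) * Δ l x := by
    intro l
    have hg : glam1 l x ≠ 0 := by
      rw [hglam1]; exact div_ne_zero (hgne x) (hden l x)
    rw [hmlam, mul_comm (ghat1 x / glam1 l x), mul_assoc, div_mul_cancel₀ _ hg]; ring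
  have key2 : ∀ l, mlam l x
      = mhat x + (mhat x * β / ghat1 x * wh x + α * mhat x * ghat1 x * wh x
          - α^2 * β * mhat x * ghat1 x * (wh x)^3) * Δ l x := by
    intro l
    have hg : glam1 l x ≠ 0 := by
      rw [hglam1]; exact div_ne_zero (hgne x) (hden l x)
    rw [hmlam, hglam1]
    rw [div_div_eq_mul_div, mul_comm (ghat1 x), mul_div_assoc, div_self (hgne x), mul_one]
    have h1 : ghat1 x * (ghat1 x)⁻¹ = 1 := mul_inv_cancel₀ (hgne x)
    linear_combination (α * β * mhat x * (wh x)^2 * (Δ l x)^2) * h1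
      + (α * β * mhat x * (wh x)^2) * hΔ1 l x
  have e1 : (∑ l : Fin m → Bool, mlam l x * glam1 l x)
      = (2:ℝ)^m * (mhat x * ghat1 x) := by
    simp only [key1]
    rw [Finset.sum_add_distrib, Finset.sum_const, ← Finset.mul_sum, hΔ0, mul_zero,
      add_zero, hcard, nsmul_eq_mul]
    push_cast; ring
  have e2 : (∑ l : Fin m → Bool, mlam l x) = (2:ℝ)^m * mhat x := by
    simp only [key2]
    rw [Finset.sum_add_distrib, Finset.sum_const, ← Finset.mul_sum, hΔ0, mul_zero,
      add_zero, hcard, nsmul_eq_mul]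
    push_cast; ring
  refine ⟨?_, ?_⟩
  · rw [e1, inv_mul_cancel_left₀ h2]
  · rw [e2, inv_mul_cancel_left₀ h2]
end

section
/- Let c ∈ (0,1), ĝ : [0,1]^K → [c,1], w, ŵ with 0 ≤ ŵ ≤ w, ‖w‖_∞ < ∞, and Δ : [0,1]^K → {−1,+1} with E_X[w ŵ Δ] = 0 under X ~ Uniform([0,1]^K). Suppose β(c^{−1}‖w‖_∞ + α‖w‖_∞²) ≤ 1/2. Then E_X[ w(X) ĝ(1,X) / (1 + (β/ĝ(1,X))ŵ(X)Δ(X) − αβ ŵ(X)²) ] ≥ E_X[w(X)ĝ(1,X)] + αβ E_X[ĝ(1,X) w(X) ŵ(X)²] − C₀ β³, with C₀ = 2c^{−2}(1+‖w‖_∞)⁴. -/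
open MeasureTheory Set

lemma unif_finite (K : ℕ) : IsFiniteMeasure (unif K) := by
  constructor
  rw [unif, Measure.restrict_apply_univ]
  exact isCompact_Icc.measure_lt_top

lemma integrable_of_bdd_s12 {α : Type*} [MeasurableSpace α] {μ : Measure α} [IsFiniteMeasure μ]
    {f : α → ℝ} (hm : Measurable f) {C : ℝ} (h : ∀ x, |f x| ≤ C) : Integrable f μ :=
  ⟨hm.aestronglyMeasurable,
    HasFiniteIntegral.of_bounded (C := C) (ae_of_all _ (by simpa [Real.norm_eq_abs] using h))⟩

/-- key Case-2 Taylor-expansion lower bound.  Here `W = ‖w‖_∞`. -/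
theorem stmt12 {K : ℕ} (c α β W : ℝ) (hc : c ∈ Set.Ioo (0:ℝ) 1)
    (g1 w wh Δ : (Fin K → ℝ) → ℝ)
    (hg : ∀ x, g1 x ∈ Set.Icc c 1)
    (hwh : ∀ x, 0 ≤ wh x ∧ wh x ≤ w x)
    (hW : ∀ x, w x ≤ W)
    (hΔ : ∀ x, Δ x = 1 ∨ Δ x = -1)
    (hgm : Measurable g1) (hwm : Measurable w) (hwhm : Measurable wh)
    (hΔm : Measurable Δ)
    (hα : 0 < α) (hβ : 0 < β)
    (hsmall : β * (c⁻¹ * W + α * W^2) ≤ 1/2)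
    (hbal : ∫ x, w x * wh x * Δ x ∂(unif K) = 0) :
    ∫ x, w x * g1 x / (1 + β / g1 x * wh x * Δ x - α * β * (wh x)^2) ∂(unif K)
      ≥ (∫ x, w x * g1 x ∂(unif K))
        + α * β * (∫ x, g1 x * w x * (wh x)^2 ∂(unif K))
        - (2 * (c^2)⁻¹ * (1 + W)^4) * β^3 := by
  obtain ⟨hc0, hc1⟩ := hc
  haveI : IsFiniteMeasure (unif K) := unif_finite K
  have hw0 : ∀ x, 0 ≤ w x := fun x => le_trans (hwh x).1 (hwh x).2
  have hW0 : 0 ≤ W := le_trans (hw0 (fun _ => 0)) (hW (fun _ => 0))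
  have hwhW : ∀ x, wh x ≤ W := fun x => (hwh x).2.trans (hW x)
  have hgpos : ∀ x, 0 < g1 x := fun x => lt_of_lt_of_le hc0 (hg x).1
  have hΔabs : ∀ x, |Δ x| = 1 := by
    intro x; rcases hΔ x with h | h <;> rw [h] <;> norm_num
  -- bound on u
  set u : (Fin K → ℝ) → ℝ := fun x => β / g1 x * wh x * Δ x - α * β * (wh x)^2 with hu
  have hub : ∀ x, |u x| ≤ 1/2 := by
    intro x
    have h1 : β / g1 x ≤ β / c := by
      apply div_le_div_of_nonneg_left hβ.le hc0 (hg x).1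
    have h2 : 0 ≤ β / g1 x := div_nonneg hβ.le (hgpos x).le
    have h3 : |β / g1 x * wh x * Δ x| ≤ β / c * W := by
      rw [abs_mul, hΔabs x, mul_one, abs_mul, abs_of_nonneg h2, abs_of_nonneg (hwh x).1]
      exact mul_le_mul h1 (hwhW x) (hwh x).1 (div_nonneg hβ.le hc0.le)
    have h4 : |α * β * (wh x)^2| ≤ α * β * W^2 := by
      rw [abs_of_nonneg (by positivity)]
      apply mul_le_mul_of_nonneg_left _ (by positivity)
      exact pow_le_pow_left₀ (hwh x).1 (hwhW x) 2
    have h5 : β / c * W + α * β * W^2 ≤ 1/2 := by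
      have : β / c = β * c⁻¹ := div_eq_mul_inv β c
      nlinarith [hsmall]
    calc |u x| ≤ |β / g1 x * wh x * Δ x| + |α * β * (wh x)^2| := abs_sub _ _
      _ ≤ 1/2 := by linarith
  have hD : ∀ x, (1:ℝ)/2 ≤ 1 + u x := by
    intro x; have := (abs_le.mp (hub x)).1; linarith
  have hDpos : ∀ x, (0:ℝ) < 1 + u x := fun x => lt_of_lt_of_le (by norm_num) (hD x)
  -- pointwise lower bound
  have hpt : ∀ x, w x * g1 x * (1 - u x) ≤ w x * g1 x / (1 + u x) := by
    intro x
    have hprod : (1 - u x) * (1 + u x) ≤ 1 := by nlinarith [sq_nonneg (u x)]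
    have h1 : 1 - u x ≤ 1 / (1 + u x) := (le_div_iff₀ (hDpos x)).mpr hprod
    have h2 : 0 ≤ w x * g1 x := mul_nonneg (hw0 x) (hgpos x).le
    calc w x * g1 x * (1 - u x) ≤ w x * g1 x * (1 / (1 + u x)) :=
          mul_le_mul_of_nonneg_left h1 h2
      _ = w x * g1 x / (1 + u x) := by ring
  -- rewrite lower integrand
  have heq : ∀ x, w x * g1 x * (1 - u x)
      = w x * g1 x - β * (w x * wh x * Δ x) + α * β * (g1 x * w x * (wh x)^2) := by
    intro x
    have hg0 : g1 x ≠ 0 := (hgpos x).ne'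
    simp only [hu]
    field_simp
    ring
  -- measurability & integrability
  have hum : Measurable u := by
    apply Measurable.sub
    · exact ((Measurable.div measurable_const hgm).mul hwhm).mul hΔm
    · exact measurable_const.mul (hwhm.pow_const 2)
  have hbdd : ∀ x, |w x| ≤ W := fun x => by
    rw [abs_of_nonneg (hw0 x)]; exact hW x
  have hg1b : ∀ x, |g1 x| ≤ 1 := fun x => by
    rw [abs_of_nonneg (hgpos x).le]; exact (hg x).2
  have hi1 : Integrable (fun x => w x * g1 x / (1 + u x)) (unif K) := by
    apply integrable_of_bdd_s12 (C := 2 * W)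
    · exact (hwm.mul hgm).div (measurable_const.add hum)
    · intro x
      rw [abs_div, abs_of_pos (hDpos x)]
      rw [div_le_iff₀ (hDpos x), abs_mul]
      have h1 : |w x| * |g1 x| ≤ W := by
        calc |w x| * |g1 x| ≤ W * 1 := mul_le_mul (hbdd x) (hg1b x) (abs_nonneg _) hW0
          _ = W := mul_one W
      have key : ∀ t : ℝ, 1/2 ≤ 1 + t → |w x| * |g1 x| ≤ 2 * W * (1 + t) := by
        intro t ht
        nlinarith [mul_nonneg hW0 (show (0:ℝ) ≤ t + 1/2 by linarith), h1]
      exact key (u x) (hD x)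
  have hi2 : Integrable (fun x => w x * g1 x) (unif K) := by
    apply integrable_of_bdd_s12 (C := W) (hwm.mul hgm)
    intro x
    calc |w x * g1 x| = |w x| * |g1 x| := abs_mul _ _
      _ ≤ W * 1 := mul_le_mul (hbdd x) (hg1b x) (abs_nonneg _) hW0
      _ = W := mul_one W
  have hi3 : Integrable (fun x => w x * wh x * Δ x) (unif K) := by
    apply integrable_of_bdd_s12 (C := W * W) ((hwm.mul hwhm).mul hΔm)
    intro x
    simp only [Pi.mul_apply]
    rw [abs_mul, abs_mul, hΔabs x, mul_one, abs_of_nonneg (hw0 x), abs_of_nonneg (hwh x).1]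
    exact mul_le_mul (hW x) (hwhW x) (hwh x).1 hW0
  have hi4 : Integrable (fun x => g1 x * w x * (wh x)^2) (unif K) := by
    apply integrable_of_bdd_s12 (C := W * (W * W)) ((hgm.mul hwm).mul (hwhm.pow_const 2))
    intro x
    simp only [Pi.mul_apply]
    rw [abs_mul, abs_mul, abs_of_nonneg (hgpos x).le, abs_of_nonneg (hw0 x), abs_of_nonneg (sq_nonneg (wh x))]
    have h1 : (wh x)^2 ≤ W * W := by nlinarith [(hwh x).1, hwhW x]
    calc g1 x * w x * (wh x)^2 ≤ 1 * w x * (wh x)^2 := by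
          apply mul_le_mul_of_nonneg_right _ (sq_nonneg _)
          exact mul_le_mul_of_nonneg_right (hg x).2 (hw0 x)
      _ = w x * (wh x)^2 := by ring
      _ ≤ W * (W * W) := mul_le_mul (hW x) h1 (sq_nonneg _) hW0
  have hi5 : Integrable (fun x => w x * g1 x * (1 - u x)) (unif K) := by
    have : (fun x => w x * g1 x * (1 - u x))
        = fun x => w x * g1 x - β * (w x * wh x * Δ x) + α * β * (g1 x * w x * (wh x)^2) := by
      funext x; exact heq x
    rw [this]
    exact (hi2.sub (hi3.const_mul β)).add (hi4.const_mul (α * β))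
  -- integral comparison
  have hmono : ∫ x, w x * g1 x * (1 - u x) ∂(unif K)
      ≤ ∫ x, w x * g1 x / (1 + u x) ∂(unif K) :=
    integral_mono hi5 hi1 hpt
  have hsplit : ∫ x, w x * g1 x * (1 - u x) ∂(unif K)
      = (∫ x, w x * g1 x ∂(unif K)) + α * β * (∫ x, g1 x * w x * (wh x)^2 ∂(unif K)) := by
    have h1 : ∫ x, w x * g1 x * (1 - u x) ∂(unif K)
        = ∫ x, (w x * g1 x - β * (w x * wh x * Δ x) + α * β * (g1 x * w x * (wh x)^2)) ∂(unif K) := by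
      congr 1; funext x; exact heq x
    have hiB : Integrable (fun x => β * (w x * wh x * Δ x)) (unif K) := hi3.const_mul β
    have hiA : Integrable (fun x => w x * g1 x - β * (w x * wh x * Δ x)) (unif K) := hi2.sub hiB
    have hiC : Integrable (fun x => α * β * (g1 x * w x * (wh x)^2)) (unif K) :=
      hi4.const_mul (α * β)
    rw [h1, integral_add hiA hiC, integral_sub hi2 hiB, integral_const_mul,
        integral_const_mul, hbal]
    ring
  have hC : 0 ≤ (2 * (c^2)⁻¹ * (1 + W)^4) * β^3 := by positivity
  rw [ge_iff_le]
  calc (∫ x, w x * g1 x ∂(unif K)) + α * β * (∫ x, g1 x * w x * (wh x)^2 ∂(unif K))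
        - (2 * (c^2)⁻¹ * (1 + W)^4) * β^3
      ≤ (∫ x, w x * g1 x ∂(unif K)) + α * β * (∫ x, g1 x * w x * (wh x)^2 ∂(unif K)) := by
        linarith
    _ = ∫ x, w x * g1 x * (1 - u x) ∂(unif K) := hsplit.symm
    _ ≤ ∫ x, w x * g1 x / (1 + u x) ∂(unif K) := hmono
    _ = ∫ x, w x * g1 x / (1 + β / g1 x * wh x * Δ x - α * β * (wh x)^2) ∂(unif K) := by
        congr 1; funext x; simp only [hu]; ring_nf
end

section
/- Under the assumptions c ≤ m̂(x) ≤ 1−c, |Y| ≤ G a.s., ‖ĝ(d,·) − g₀(d,·)‖²_{P_X,2} ≤ e_n (d=0), ≤ e_n′ (d=1), and ‖m̂ − m₀‖²_{P_X,2} ≤ f_n, the population bias of the doubly robust WATE score satisfies |θ̄ − θ| ≤ c^{−1}‖w‖_{P_X,∞} √(f_n) (√(e_n) + √(e_n′)), where θ = E[w(X)(g₀(1,X) − g₀(0,X))] and θ̄ = E[ w(X)( ĝ(1,X) − ĝ(0,X) + (D/m̂(X) − (1−D)/(1−m̂(X)))(Y − ĝ(D,X)) ) ]. -/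
open MeasureTheory Set

lemma bdd_integrable {α : Type*} [MeasurableSpace α] {μ : Measure α} [IsFiniteMeasure μ]
    {f : α → ℝ} (hm : AEStronglyMeasurable f μ) {C : ℝ} (h : ∀ᵐ x ∂μ, |f x| ≤ C) :
    Integrable f μ :=
  (integrable_const C).mono' hm (by simpa [Real.norm_eq_abs] using h)

lemma cauchy_schwarz' {α : Type*} [MeasurableSpace α] {μ : Measure α} [IsFiniteMeasure μ]
    {f g : α → ℝ} (hfm : AEStronglyMeasurable f μ) (hgm : AEStronglyMeasurable g μ)
    {Cf Cg : ℝ} (hfb : ∀ᵐ x ∂μ, |f x| ≤ Cf) (hgb : ∀ᵐ x ∂μ, |g x| ≤ Cg) :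
    ∫ x, |f x * g x| ∂μ ≤ Real.sqrt (∫ x, f x ^ 2 ∂μ) * Real.sqrt (∫ x, g x ^ 2 ∂μ) := by
  have hconj : (2:ℝ).HolderConjugate 2 := ⟨by norm_num, by norm_num, by norm_num⟩
  have hf2 : MemLp (fun x => |f x|) (ENNReal.ofReal 2) μ :=
    MemLp.of_bound hfm.norm Cf (by simpa [Real.norm_eq_abs, abs_abs] using hfb)
  have hg2 : MemLp (fun x => |g x|) (ENNReal.ofReal 2) μ :=
    MemLp.of_bound hgm.norm Cg (by simpa [Real.norm_eq_abs, abs_abs] using hgb)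
  have key := integral_mul_le_Lp_mul_Lq_of_nonneg hconj
    (f := fun x => |f x|) (g := fun x => |g x|)
    (Filter.Eventually.of_forall fun x => abs_nonneg _)
    (Filter.Eventually.of_forall fun x => abs_nonneg _) hf2 hg2
  have hrw : ∀ y : ℝ, |y| ^ (2:ℝ) = y ^ 2 := fun y => by
    rw [show (2:ℝ) = ((2:ℕ):ℝ) by norm_num, Real.rpow_natCast, sq_abs]
  simp_rw [hrw, ← Real.sqrt_eq_rpow, ← abs_mul] at key
  exact key

/-- population bias of the doubly robust WATE score:
`|θ̄ − θ| ≤ c⁻¹ ‖w‖_∞ √f_n (√e_n + √e_n′)`.  Here the treatment is encoded by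
`D : Ω → Bool`, `g₀` is the outcome regression (`E[Y|D,X] = g₀(D,X)` encoded by the
orthogonality hypothesis `hU`), and `m₀` is the propensity (`E[D|X] = m₀(X)` encoded
by `hV`); the marginal of `X` is uniform on `[0,1]^K`. -/
theorem stmt18 {K : ℕ} {Ω : Type*} [MeasurableSpace Ω]
    (P : Measure Ω) [IsProbabilityMeasure P]
    (c G en en' fn Winf : ℝ) (hc : c ∈ Set.Ioo (0:ℝ) 1)
    (hen : 0 ≤ en) (hen' : 0 ≤ en') (hfn : 0 ≤ fn)
    (X : Ω → (Fin K → ℝ)) (D : Ω → Bool) (Y : Ω → ℝ)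
    (hXm : Measurable X) (hDm : Measurable D) (hYm : Measurable Y)
    (g0 ghat : Bool → (Fin K → ℝ) → ℝ) (m0 mhat w : (Fin K → ℝ) → ℝ)
    (hg0m : ∀ d, Measurable (g0 d)) (hghatm : ∀ d, Measurable (ghat d))
    (hm0m : Measurable m0) (hmhatm : Measurable mhat) (hwm : Measurable w)
    (hmhat : ∀ x, mhat x ∈ Set.Icc c (1-c))
    (hY : ∀ ω, |Y ω| ≤ G)
    (hg0b : ∀ d x, |g0 d x| ≤ G) (hghatb : ∀ d x, |ghat d x| ≤ G)
    (hwb : ∀ x, |w x| ≤ Winf)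
    (hX : Measure.map X P = unif K)
    (hU : ∀ h : (Fin K → ℝ) → Bool → ℝ,
      Measurable (Function.uncurry h) → (∃ C, ∀ x d, |h x d| ≤ C) →
      ∫ ω, (Y ω - g0 (D ω) (X ω)) * h (X ω) (D ω) ∂P = 0)
    (hV : ∀ h : (Fin K → ℝ) → ℝ,
      Measurable h → (∃ C, ∀ x, |h x| ≤ C) →
      ∫ ω, ((if D ω then (1:ℝ) else 0) - m0 (X ω)) * h (X ω) ∂P = 0)
    (he : ∫ x, (ghat false x - g0 false x)^2 ∂(unif K) ≤ en)
    (he' : ∫ x, (ghat true x - g0 true x)^2 ∂(unif K) ≤ en')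
    (hf : ∫ x, (mhat x - m0 x)^2 ∂(unif K) ≤ fn) :
    |(∫ ω, w (X ω) * (ghat true (X ω) - ghat false (X ω)
        + ((if D ω then (1:ℝ) else 0) / mhat (X ω)
            - (if D ω then (0:ℝ) else 1) / (1 - mhat (X ω)))
          * (Y ω - ghat (D ω) (X ω))) ∂P)
      - ∫ x, w x * (g0 true x - g0 false x) ∂(unif K)|
    ≤ c⁻¹ * Winf * Real.sqrt fn * (Real.sqrt en + Real.sqrt en') := by
  obtain ⟨hc0, hc1⟩ := hc
  have hG : 0 ≤ G := (abs_nonneg _).trans (hg0b true 0)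
  have hW : 0 ≤ Winf := (abs_nonneg _).trans (hwb 0)
  have hmge : ∀ x, c ≤ mhat x := fun x => (hmhat x).1
  have hmle : ∀ x, c ≤ 1 - mhat x := fun x => by have := (hmhat x).2; linarith
  have hmpos : ∀ x, 0 < mhat x := fun x => lt_of_lt_of_le hc0 (hmge x)
  have hmpos' : ∀ x, 0 < 1 - mhat x := fun x => lt_of_lt_of_le hc0 (hmle x)
  have hm0' : ∀ x, mhat x ≠ 0 := fun x => ne_of_gt (hmpos x)
  have hm1' : ∀ x, (1:ℝ) - mhat x ≠ 0 := fun x => ne_of_gt (hmpos' x)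
  haveI hμP : IsProbabilityMeasure (unif K) := hX ▸ Measure.isProbabilityMeasure_map hXm.aemeasurable
  have habs_sub : ∀ u v : ℝ, |u - v| ≤ |u| + |v| := fun u v => by
    rw [sub_eq_add_neg]; exact (abs_add_le _ _).trans (by rw [abs_neg])
  have hdm : Measurable (fun ω => if D ω then (1:ℝ) else 0) :=
    Measurable.ite (hDm (measurableSet_singleton true)) measurable_const measurable_const
  -- Step A : m0 ∘ X ∈ [0,1] a.e.
  have hA : ∀ᵐ ω ∂P, m0 (X ω) ∈ Set.Icc (0:ℝ) 1 := by
    have hneg : ∀ n : ℕ, ∀ᵐ ω ∂P, m0 (X ω) ∉ Set.Ico (-(n:ℝ)-1) 0 := by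
      intro n
      set S : Set (Fin K → ℝ) := m0 ⁻¹' Set.Ico (-(n:ℝ)-1) 0 with hS
      have hs : MeasurableSet S := hm0m measurableSet_Ico
      have hindm : Measurable (S.indicator (fun _ => (1:ℝ))) := measurable_const.indicator hs
      have h0 := hV (S.indicator (fun _ => (1:ℝ))) hindm
        ⟨1, fun x => by by_cases hx : x ∈ S <;>
          simp [Set.indicator_of_mem, Set.indicator_of_notMem, hx]⟩
      have hfnn : ∀ ω, 0 ≤ ((if D ω then (1:ℝ) else 0) - m0 (X ω)) * S.indicator (fun _ => (1:ℝ)) (X ω) := by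
        intro ω; by_cases hx : X ω ∈ S
        · have h2 : m0 (X ω) < 0 := hx.2
          simp only [Set.indicator_of_mem hx, mul_one]
          split <;> linarith
        · simp [Set.indicator_of_notMem hx]
      have hfb : ∀ ω, |((if D ω then (1:ℝ) else 0) - m0 (X ω)) * S.indicator (fun _ => (1:ℝ)) (X ω)| ≤ (n:ℝ)+2 := by
        intro ω; by_cases hx : X ω ∈ S
        · have h1 : -(n:ℝ)-1 ≤ m0 (X ω) := hx.1
          have h2 : m0 (X ω) < 0 := hx.2
          simp only [Set.indicator_of_mem hx, mul_one]
          apply abs_le.2; constructor <;> split <;> push_cast <;> linarith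
        · simp only [Set.indicator_of_notMem hx, mul_zero, abs_zero]; positivity
      have hfm : Measurable (fun ω => ((if D ω then (1:ℝ) else 0) - m0 (X ω)) * S.indicator (fun _ => (1:ℝ)) (X ω)) :=
        (hdm.sub (hm0m.comp hXm)).mul (hindm.comp hXm)
      have hint : Integrable (fun ω => ((if D ω then (1:ℝ) else 0) - m0 (X ω)) * S.indicator (fun _ => (1:ℝ)) (X ω)) P :=
        bdd_integrable hfm.aestronglyMeasurable (ae_of_all _ hfb)
      have hz := (integral_eq_zero_iff_of_nonneg hfnn hint).1 h0
      filter_upwards [hz] with ω hω hmem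
      have hx : X ω ∈ S := hmem
      simp only [Pi.zero_apply, Set.indicator_of_mem hx, mul_one] at hω
      have h2 : m0 (X ω) < 0 := hmem.2
      revert hω; split <;> intro hω <;> linarith
    have hpos : ∀ n : ℕ, ∀ᵐ ω ∂P, m0 (X ω) ∉ Set.Ioc (1:ℝ) ((n:ℝ)+2) := by
      intro n
      set S : Set (Fin K → ℝ) := m0 ⁻¹' Set.Ioc (1:ℝ) ((n:ℝ)+2) with hS
      have hs : MeasurableSet S := hm0m measurableSet_Ioc
      have hindm : Measurable (S.indicator (fun _ => (1:ℝ))) := measurable_const.indicator hs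
      have h0 := hV (S.indicator (fun _ => (1:ℝ))) hindm
        ⟨1, fun x => by by_cases hx : x ∈ S <;>
          simp [Set.indicator_of_mem, Set.indicator_of_notMem, hx]⟩
      have hg0' : ∫ ω, -(((if D ω then (1:ℝ) else 0) - m0 (X ω)) * S.indicator (fun _ => (1:ℝ)) (X ω)) ∂P = 0 := by
        rw [integral_neg, h0, neg_zero]
      have hfnn : ∀ ω, 0 ≤ -(((if D ω then (1:ℝ) else 0) - m0 (X ω)) * S.indicator (fun _ => (1:ℝ)) (X ω)) := by
        intro ω; by_cases hx : X ω ∈ S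
        · have h2 : 1 < m0 (X ω) := hx.1
          simp only [Set.indicator_of_mem hx, mul_one]
          split <;> linarith
        · simp [Set.indicator_of_notMem hx]
      have hfb : ∀ ω, |(-(((if D ω then (1:ℝ) else 0) - m0 (X ω)) * S.indicator (fun _ => (1:ℝ)) (X ω)))| ≤ (n:ℝ)+3 := by
        intro ω; rw [abs_neg]; by_cases hx : X ω ∈ S
        · have h1 : 1 < m0 (X ω) := hx.1
          have h2 : m0 (X ω) ≤ (n:ℝ)+2 := hx.2
          simp only [Set.indicator_of_mem hx, mul_one]
          apply abs_le.2; constructor <;> split <;> push_cast <;> linarith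
        · simp only [Set.indicator_of_notMem hx, mul_zero, abs_zero]; positivity
      have hfm : Measurable (fun ω => -(((if D ω then (1:ℝ) else 0) - m0 (X ω)) * S.indicator (fun _ => (1:ℝ)) (X ω))) :=
        ((hdm.sub (hm0m.comp hXm)).mul (hindm.comp hXm)).neg
      have hint : Integrable (fun ω => -(((if D ω then (1:ℝ) else 0) - m0 (X ω)) * S.indicator (fun _ => (1:ℝ)) (X ω))) P :=
        bdd_integrable hfm.aestronglyMeasurable (ae_of_all _ hfb)
      have hz := (integral_eq_zero_iff_of_nonneg hfnn hint).1 hg0'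
      filter_upwards [hz] with ω hω hmem
      have hx : X ω ∈ S := hmem
      simp only [Pi.zero_apply, Set.indicator_of_mem hx, mul_one, neg_eq_zero] at hω
      have h2 : 1 < m0 (X ω) := hmem.1
      revert hω; split <;> intro hω <;> linarith
    filter_upwards [ae_all_iff.2 hneg, ae_all_iff.2 hpos] with ω h1 h2
    constructor
    · by_contra hlt; push_neg at hlt
      exact h1 ⌈-(m0 (X ω))⌉₊ ⟨by have := Nat.le_ceil (-(m0 (X ω))); linarith, hlt⟩
    · by_contra hgt; push_neg at hgt
      exact h2 ⌈m0 (X ω)⌉₊ ⟨hgt, by have := Nat.le_ceil (m0 (X ω)); linarith⟩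
    -- named auxiliary functions
  set h1f : (Fin K → ℝ) → Bool → ℝ := fun x dd =>
    w x * ((if dd then (1:ℝ) else 0) / mhat x - (if dd then (0:ℝ) else 1) / (1 - mhat x)) with hh1
  set h2f : (Fin K → ℝ) → ℝ := fun x =>
    w x * (-(ghat true x - g0 true x) / mhat x - (ghat false x - g0 false x) / (1 - mhat x)) with hh2
  set F : (Fin K → ℝ) → ℝ := fun x =>
    w x * ((mhat x - m0 x) * ((ghat true x - g0 true x) / mhat x
      + (ghat false x - g0 false x) / (1 - mhat x))) with hF
  -- pointwise identity
  have hid : ∀ ω, w (X ω) * (ghat true (X ω) - ghat false (X ω)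
        + ((if D ω then (1:ℝ) else 0) / mhat (X ω)
            - (if D ω then (0:ℝ) else 1) / (1 - mhat (X ω)))
          * (Y ω - ghat (D ω) (X ω)))
      = w (X ω) * (g0 true (X ω) - g0 false (X ω))
        + ((Y ω - g0 (D ω) (X ω)) * h1f (X ω) (D ω)
        + (((if D ω then (1:ℝ) else 0) - m0 (X ω)) * h2f (X ω)
        + F (X ω))) := by
    intro ω
    have e1 := hm0' (X ω); have e2 := hm1' (X ω)
    cases hD : D ω <;> simp only [hD, hh1, hh2, hF] <;> simp <;> field_simp <;> ring
  -- bounds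
  have ha1b : ∀ x, |ghat true x - g0 true x| ≤ 2*G := fun x =>
    (habs_sub _ _).trans (by linarith [hghatb true x, hg0b true x])
  have ha0b : ∀ x, |ghat false x - g0 false x| ≤ 2*G := fun x =>
    (habs_sub _ _).trans (by linarith [hghatb false x, hg0b false x])
  have hdivb : ∀ (a t : ℝ), c ≤ t → |a| ≤ 2*G → |a / t| ≤ 2*G/c := by
    intro a t ht ha
    rw [abs_div, abs_of_pos (lt_of_lt_of_le hc0 ht)]
    exact div_le_div₀ (by linarith) ha hc0 ht
  have hb1 : ∀ x dd, |h1f x dd| ≤ Winf * (c⁻¹ + c⁻¹) := by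
    intro x dd
    have hq1 : |(if dd then (1:ℝ) else 0) / mhat x| ≤ c⁻¹ := by
      rw [abs_div, abs_of_pos (hmpos x), ← one_div]
      refine div_le_div₀ zero_le_one ?_ hc0 (hmge x)
      cases dd <;> simp
    have hq2 : |(if dd then (0:ℝ) else 1) / (1 - mhat x)| ≤ c⁻¹ := by
      rw [abs_div, abs_of_pos (hmpos' x), ← one_div]
      refine div_le_div₀ zero_le_one ?_ hc0 (hmle x)
      cases dd <;> simp
    rw [hh1, abs_mul]
    exact mul_le_mul (hwb x) ((habs_sub _ _).trans (add_le_add hq1 hq2)) (abs_nonneg _) hW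
  have hb2 : ∀ x, |h2f x| ≤ Winf * (2*G/c + 2*G/c) := by
    intro x
    rw [hh2, abs_mul]
    refine mul_le_mul (hwb x) ((habs_sub _ _).trans (add_le_add ?_ ?_)) (abs_nonneg _) hW
    · rw [neg_div, abs_neg]; exact hdivb _ _ (hmge x) (ha1b x)
    · exact hdivb _ _ (hmle x) (ha0b x)
  have hFb : ∀ x, m0 x ∈ Set.Icc (0:ℝ) 1 → |F x| ≤ Winf * (1 * (2*G/c + 2*G/c)) := by
    intro x hx
    have hdm0 : |mhat x - m0 x| ≤ 1 :=
      abs_le.2 ⟨by linarith [hmge x, hx.2, hc0], by linarith [(hmhat x).2, hx.1, hc0]⟩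
    have hS : |(ghat true x - g0 true x) / mhat x + (ghat false x - g0 false x) / (1 - mhat x)|
        ≤ 2*G/c + 2*G/c :=
      (abs_add_le _ _).trans (add_le_add (hdivb _ _ (hmge x) (ha1b x)) (hdivb _ _ (hmle x) (ha0b x)))
    rw [hF, abs_mul, abs_mul]
    exact mul_le_mul (hwb x) (mul_le_mul hdm0 hS (abs_nonneg _) zero_le_one)
      (mul_nonneg (abs_nonneg _) (abs_nonneg _)) hW
  -- measurability
  have hUmeas : Measurable (Function.uncurry h1f) := by
    rw [hh1]
    apply Measurable.mul (hwm.comp measurable_fst)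
    apply Measurable.sub
    · exact (Measurable.ite (measurable_snd (measurableSet_singleton true))
        measurable_const measurable_const).div (hmhatm.comp measurable_fst)
    · exact (Measurable.ite (measurable_snd (measurableSet_singleton true))
        measurable_const measurable_const).div (measurable_const.sub (hmhatm.comp measurable_fst))
  have hVmeas : Measurable h2f := by
    rw [hh2]
    exact hwm.mul ((((hghatm true).sub (hg0m true)).neg.div hmhatm).sub
      (((hghatm false).sub (hg0m false)).div (measurable_const.sub hmhatm)))
  have hFmeas : Measurable F := by
    rw [hF]
    exact hwm.mul ((hmhatm.sub hm0m).mul ((((hghatm true).sub (hg0m true)).div hmhatm).add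
      (((hghatm false).sub (hg0m false)).div (measurable_const.sub hmhatm))))
  have hcomp : ∀ (f : Bool → (Fin K → ℝ) → ℝ), (∀ d, Measurable (f d)) →
      Measurable (fun ω => f (D ω) (X ω)) := by
    intro f hf
    have : (fun ω => f (D ω) (X ω)) = fun ω => if D ω then f true (X ω) else f false (X ω) :=
      funext fun ω => by cases D ω <;> simp
    rw [this]
    exact Measurable.ite (hDm (measurableSet_singleton true)) ((hf true).comp hXm)
      ((hf false).comp hXm)
  -- the two orthogonality identities
  have hT1zero : ∫ ω, (Y ω - g0 (D ω) (X ω)) * h1f (X ω) (D ω) ∂P = 0 :=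
    hU h1f hUmeas ⟨_, hb1⟩
  have hT2zero : ∫ ω, ((if D ω then (1:ℝ) else 0) - m0 (X ω)) * h2f (X ω) ∂P = 0 :=
    hV h2f hVmeas ⟨_, hb2⟩
  -- integrability
  have hintT0 : Integrable (fun ω => w (X ω) * (g0 true (X ω) - g0 false (X ω))) P := by
    refine bdd_integrable ((hwm.comp hXm).mul (((hg0m true).comp hXm).sub
      ((hg0m false).comp hXm))).aestronglyMeasurable (C := Winf * (G + G)) (ae_of_all _ fun ω => ?_)
    rw [abs_mul]
    exact mul_le_mul (hwb _) ((habs_sub _ _).trans (add_le_add (hg0b _ _) (hg0b _ _)))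
      (abs_nonneg _) hW
  have hintT1 : Integrable (fun ω => (Y ω - g0 (D ω) (X ω)) * h1f (X ω) (D ω)) P := by
    refine bdd_integrable ((hYm.sub (hcomp g0 hg0m)).mul
      (hUmeas.comp (hXm.prodMk hDm))).aestronglyMeasurable
      (C := (G + G) * (Winf * (c⁻¹ + c⁻¹))) (ae_of_all _ fun ω => ?_)
    rw [abs_mul]
    refine mul_le_mul ((habs_sub _ _).trans (add_le_add (hY ω) (hg0b _ _))) (hb1 _ _)
      (abs_nonneg _) (by linarith)
  have hintT2 : Integrable (fun ω => ((if D ω then (1:ℝ) else 0) - m0 (X ω)) * h2f (X ω)) P := by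
    refine bdd_integrable ((hdm.sub (hm0m.comp hXm)).mul
      (hVmeas.comp hXm)).aestronglyMeasurable
      (C := 1 * (Winf * (2*G/c + 2*G/c))) ?_
    filter_upwards [hA] with ω hω
    rw [abs_mul]
    refine mul_le_mul ?_ (hb2 _) (abs_nonneg _) zero_le_one
    have hd01 : (0:ℝ) ≤ (if D ω then (1:ℝ) else 0) ∧ (if D ω then (1:ℝ) else 0) ≤ 1 := by
      split <;> norm_num
    exact abs_le.2 ⟨by linarith [hω.1, hω.2, hd01.1, hd01.2], by linarith [hω.1, hω.2, hd01.1, hd01.2]⟩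
  have hintF : Integrable (fun ω => F (X ω)) P := by
    refine bdd_integrable ((hFmeas.comp hXm)).aestronglyMeasurable
      (C := Winf * (1 * (2*G/c + 2*G/c))) ?_
    filter_upwards [hA] with ω hω
    exact hFb _ hω
  -- split θ̄
  have hbar : (∫ ω, w (X ω) * (ghat true (X ω) - ghat false (X ω)
        + ((if D ω then (1:ℝ) else 0) / mhat (X ω)
            - (if D ω then (0:ℝ) else 1) / (1 - mhat (X ω)))
          * (Y ω - ghat (D ω) (X ω))) ∂P)
      = (∫ ω, w (X ω) * (g0 true (X ω) - g0 false (X ω)) ∂P) + ∫ ω, F (X ω) ∂P := by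
    rw [show (fun ω => w (X ω) * (ghat true (X ω) - ghat false (X ω)
        + ((if D ω then (1:ℝ) else 0) / mhat (X ω)
            - (if D ω then (0:ℝ) else 1) / (1 - mhat (X ω)))
          * (Y ω - ghat (D ω) (X ω))))
      = (fun ω => w (X ω) * (g0 true (X ω) - g0 false (X ω))
        + ((Y ω - g0 (D ω) (X ω)) * h1f (X ω) (D ω)
        + (((if D ω then (1:ℝ) else 0) - m0 (X ω)) * h2f (X ω)
        + F (X ω)))) from funext hid]
    have hint23 : Integrable (fun ω => ((if D ω then (1:ℝ) else 0) - m0 (X ω)) * h2f (X ω)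
        + F (X ω)) P := hintT2.add hintF
    have hint123 : Integrable (fun ω => (Y ω - g0 (D ω) (X ω)) * h1f (X ω) (D ω)
        + (((if D ω then (1:ℝ) else 0) - m0 (X ω)) * h2f (X ω) + F (X ω))) P := hintT1.add hint23
    rw [integral_add hintT0 hint123, integral_add hintT1 hint23, integral_add hintT2 hintF,
      hT1zero, hT2zero]
    ring
  -- change of variables
  have hθ : ∫ x, w x * (g0 true x - g0 false x) ∂(unif K)
      = ∫ ω, w (X ω) * (g0 true (X ω) - g0 false (X ω)) ∂P := by
    rw [← hX]
    exact integral_map hXm.aemeasurable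
      (hwm.mul ((hg0m true).sub (hg0m false))).aestronglyMeasurable
  have hFμ : ∫ ω, F (X ω) ∂P = ∫ x, F x ∂(unif K) := by
    rw [← hX]
    exact (integral_map hXm.aemeasurable hFmeas.aestronglyMeasurable).symm
  rw [hbar, hθ, hFμ, add_sub_cancel_left]
  -- a.e. facts on unif K
  have hAμ : ∀ᵐ x ∂(unif K), m0 x ∈ Set.Icc (0:ℝ) 1 := by
    rw [← hX]
    exact (ae_map_iff hXm.aemeasurable (hm0m measurableSet_Icc)).2 hA
  have hbμ : ∀ᵐ x ∂(unif K), |mhat x - m0 x| ≤ 1 := by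
    filter_upwards [hAμ] with x hx
    exact abs_le.2 ⟨by linarith [hmge x, hx.2, hc0], by linarith [(hmhat x).2, hx.1, hc0]⟩
  have hintba1 : Integrable (fun x => |(mhat x - m0 x) * (ghat true x - g0 true x)|) (unif K) := by
    refine Integrable.abs (bdd_integrable ((hmhatm.sub hm0m).mul
      ((hghatm true).sub (hg0m true))).aestronglyMeasurable (C := 1 * (2*G)) ?_)
    filter_upwards [hbμ] with x hx
    rw [abs_mul]
    exact mul_le_mul hx (ha1b x) (abs_nonneg _) zero_le_one
  have hintba0 : Integrable (fun x => |(mhat x - m0 x) * (ghat false x - g0 false x)|) (unif K) := by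
    refine Integrable.abs (bdd_integrable ((hmhatm.sub hm0m).mul
      ((hghatm false).sub (hg0m false))).aestronglyMeasurable (C := 1 * (2*G)) ?_)
    filter_upwards [hbμ] with x hx
    rw [abs_mul]
    exact mul_le_mul hx (ha0b x) (abs_nonneg _) zero_le_one
  have hintabsF : Integrable (fun x => |F x|) (unif K) := by
    refine Integrable.abs (bdd_integrable hFmeas.aestronglyMeasurable
      (C := Winf * (1 * (2*G/c + 2*G/c))) ?_)
    filter_upwards [hAμ] with x hx
    exact hFb x hx
  -- Cauchy–Schwarz bounds
  have hCS1 : ∫ x, |(mhat x - m0 x) * (ghat true x - g0 true x)| ∂(unif K)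
      ≤ Real.sqrt fn * Real.sqrt en' := by
    refine (cauchy_schwarz' (hmhatm.sub hm0m).aestronglyMeasurable
      ((hghatm true).sub (hg0m true)).aestronglyMeasurable hbμ
      (ae_of_all _ ha1b)).trans ?_
    exact mul_le_mul (Real.sqrt_le_sqrt hf) (Real.sqrt_le_sqrt he')
      (Real.sqrt_nonneg _) (Real.sqrt_nonneg _)
  have hCS0 : ∫ x, |(mhat x - m0 x) * (ghat false x - g0 false x)| ∂(unif K)
      ≤ Real.sqrt fn * Real.sqrt en := by
    refine (cauchy_schwarz' (hmhatm.sub hm0m).aestronglyMeasurable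
      ((hghatm false).sub (hg0m false)).aestronglyMeasurable hbμ
      (ae_of_all _ ha0b)).trans ?_
    exact mul_le_mul (Real.sqrt_le_sqrt hf) (Real.sqrt_le_sqrt he)
      (Real.sqrt_nonneg _) (Real.sqrt_nonneg _)
  -- final chain
  calc |∫ x, F x ∂(unif K)|
      ≤ ∫ x, |F x| ∂(unif K) := by
        simpa [Real.norm_eq_abs] using norm_integral_le_integral_norm (μ := unif K) F
    _ ≤ ∫ x, Winf * c⁻¹ * (|(mhat x - m0 x) * (ghat true x - g0 true x)|
          + |(mhat x - m0 x) * (ghat false x - g0 false x)|) ∂(unif K) := by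
        refine integral_mono_ae hintabsF (((hintba1.add hintba0)).const_mul _) (ae_of_all _ ?_)
        intro x
        simp only []
        have hq1 : |(ghat true x - g0 true x) / mhat x| ≤ c⁻¹ * |ghat true x - g0 true x| := by
          rw [abs_div, abs_of_pos (hmpos x), inv_mul_eq_div]
          exact div_le_div₀ (abs_nonneg _) le_rfl hc0 (hmge x)
        have hq0 : |(ghat false x - g0 false x) / (1 - mhat x)|
            ≤ c⁻¹ * |ghat false x - g0 false x| := by
          rw [abs_div, abs_of_pos (hmpos' x), inv_mul_eq_div]
          exact div_le_div₀ (abs_nonneg _) le_rfl hc0 (hmle x)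
        have hS : |(ghat true x - g0 true x) / mhat x + (ghat false x - g0 false x) / (1 - mhat x)|
            ≤ c⁻¹ * |ghat true x - g0 true x| + c⁻¹ * |ghat false x - g0 false x| :=
          (abs_add_le _ _).trans (add_le_add hq1 hq0)
        have h1 : |F x| ≤ Winf * (|mhat x - m0 x| * (c⁻¹ * |ghat true x - g0 true x|
            + c⁻¹ * |ghat false x - g0 false x|)) := by
          rw [hF, abs_mul, abs_mul]
          exact mul_le_mul (hwb x) (mul_le_mul le_rfl hS (abs_nonneg _) (abs_nonneg _))
            (mul_nonneg (abs_nonneg _) (abs_nonneg _)) hW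
        refine h1.trans (le_of_eq ?_)
        rw [abs_mul, abs_mul]
        ring
    _ = Winf * c⁻¹ * ((∫ x, |(mhat x - m0 x) * (ghat true x - g0 true x)| ∂(unif K))
          + ∫ x, |(mhat x - m0 x) * (ghat false x - g0 false x)| ∂(unif K)) := by
        rw [integral_const_mul, integral_add hintba1 hintba0]
    _ ≤ Winf * c⁻¹ * (Real.sqrt fn * Real.sqrt en' + Real.sqrt fn * Real.sqrt en) := by
        exact mul_le_mul_of_nonneg_left (add_le_add hCS1 hCS0)
          (mul_nonneg hW (inv_nonneg.2 hc0.le))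
    _ = c⁻¹ * Winf * Real.sqrt fn * (Real.sqrt en + Real.sqrt en') := by ring
end
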